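/- Small-set expansion on the multislice (sharpness): for every parameter κ = (κ_1,…,κ_L) with L ≥ 2 there exists a nonempty subset A ⊆ Ω_κ with |A| < |Ω_κ| such that |∂A|·log(n/κ_min) ≤ n·|A|·log(|Ω_κ|/|A|). -/

import Mathlib

/-!
Take a color `ℓ` with `κ_ℓ = κ_min` and let `A = {ω ∈ Ω_κ : ω z = ℓ}` for a fixed coordinate `z`.
All coordinates play the same role, so double counting gives `n |A| = κ_ℓ |Ω_κ|`, i.e.
`log (|Ω_κ| / |A|) = log (n / κ_min)`. Two states of a multislice that differ in exactly two
coordinates differ by the transposition of these coordinates, and an edge leaving `A` must change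
coordinate `z`; hence every `ω ∈ A` has at most `n` neighbours outside `A` and `|∂A| ≤ n |A|`.
-/

open Finset

namespace Multislice

/-- The multislice `Ω_κ`: sequences of length `n` with values in `Fin L`
in which color `ℓ` appears exactly `κ ℓ` times. -/
def slice (L n : ℕ) (κ : Fin L → ℕ) : Finset (Fin n → Fin L) :=
  Finset.univ.filter fun ω => ∀ ℓ, (Finset.univ.filter fun i => ω i = ℓ).card = κ ℓ

/-- Average of `f` with respect to the uniform distribution on `Ω`. -/
noncomputable def expect {L n : ℕ} (Ω : Finset (Fin n → Fin L))
    (f : (Fin n → Fin L) → ℝ) : ℝ :=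
  (∑ ω ∈ Ω, f ω) / Ω.card

/-- Discrete gradient `(∇^{ij} f)(ω) = f(ω^{ij}) - f(ω)`. -/
noncomputable def grad {L n : ℕ} (i j : Fin n) (f : (Fin n → Fin L) → ℝ)
    (ω : Fin n → Fin L) : ℝ :=
  f (ω ∘ Equiv.swap i j) - f ω

/-- The Dirichlet form `𝔈_κ(f,g) = (1/(2n)) Σ_{i<j} E[(∇^{ij}f)(∇^{ij}g)]`. -/
noncomputable def dirichlet {L n : ℕ} (Ω : Finset (Fin n → Fin L))
    (f g : (Fin n → Fin L) → ℝ) : ℝ :=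
  (1 / (2 * (n : ℝ))) *
    ∑ p ∈ Finset.univ.filter (fun p : Fin n × Fin n => p.1 < p.2),
      expect Ω fun ω => grad p.1 p.2 f ω * grad p.1 p.2 g ω

/-- The weighted Dirichlet form `𝔈^G_κ(f,g) = (1/2) Σ_{i<j} G_{ij} E[(∇^{ij}f)(∇^{ij}g)]`. -/
noncomputable def wDirichlet {L n : ℕ} (G : Fin n → Fin n → ℝ)
    (Ω : Finset (Fin n → Fin L)) (f g : (Fin n → Fin L) → ℝ) : ℝ :=
  (1 / 2) *
    ∑ p ∈ Finset.univ.filter (fun p : Fin n × Fin n => p.1 < p.2),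
      G p.1 p.2 * expect Ω fun ω => grad p.1 p.2 f ω * grad p.1 p.2 g ω

/-- Entropy `Ent(f) = E[f log f] - E[f] log E[f]` (note `Real.log 0 = 0`). -/
noncomputable def entropy {L n : ℕ} (Ω : Finset (Fin n → Fin L))
    (f : (Fin n → Fin L) → ℝ) : ℝ :=
  expect Ω (fun ω => f ω * Real.log (f ω)) - expect Ω f * Real.log (expect Ω f)

/-- Variance `Var(f) = E[f²] - (E[f])²`. -/
noncomputable def variance {L n : ℕ} (Ω : Finset (Fin n → Fin L))
    (f : (Fin n → Fin L) → ℝ) : ℝ :=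
  expect Ω (fun ω => f ω ^ 2) - (expect Ω f) ^ 2

/-- The edge boundary `∂A` of `A ⊆ Ω`: edges (recorded as pairs with first endpoint
in `A` and second endpoint in `Ω \ A`) between `A` and its complement, where two
states are adjacent when they differ in exactly two coordinates. -/
def edgeBoundary {L n : ℕ} (Ω A : Finset (Fin n → Fin L)) :
    Finset ((Fin n → Fin L) × (Fin n → Fin L)) :=
  (A ×ˢ (Ω \ A)).filter fun p => (Finset.univ.filter fun i => p.1 i ≠ p.2 i).card = 2

/-- The `ℓ`-colored region `ξ_ℓ(ω) = {i : ω i = ℓ}`. -/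
def xi {L n : ℕ} (ℓ : Fin L) (ω : Fin n → Fin L) : Finset (Fin n) :=
  Finset.univ.filter fun i => ω i = ℓ

/-- The parameter `κ^{∖ℓ}` obtained from `κ` by removing the `ℓ`-th entry. -/
def removeIdx {L : ℕ} (κ : Fin L → ℕ) (ℓ : Fin L) (m : Fin (L - 1)) : ℕ :=
  if (m : ℕ) < (ℓ : ℕ) then κ ⟨m, by have := m.isLt; omega⟩
  else κ ⟨(m : ℕ) + 1, by have := m.isLt; omega⟩

def coordFiber {L n : ℕ} (κ : Fin L → ℕ) (z : Fin n) (ℓ : Fin L) : Finset (Fin n → Fin L) :=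
  (slice L n κ).filter fun ω => ω z = ℓ

section

variable {L n : ℕ} {κ : Fin L → ℕ}

lemma mem_slice {ω : Fin n → Fin L} :
    ω ∈ slice L n κ ↔ ∀ ℓ, #{i | ω i = ℓ} = κ ℓ := by
  simp [slice]

lemma comp_perm_mem_slice {ω : Fin n → Fin L} (hω : ω ∈ slice L n κ) (σ : Equiv.Perm (Fin n)) :
    ω ∘ σ ∈ slice L n κ := by
  rw [mem_slice] at hω ⊢
  intro ℓ
  rw [← hω ℓ]
  exact card_equiv σ fun i => by simp

lemma map_univ_eq_of_mem_slice {ω ω' : Fin n → Fin L} (hω : ω ∈ slice L n κ)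
    (hω' : ω' ∈ slice L n κ) : univ.val.map ω = univ.val.map ω' := by
  ext c
  have h : ∀ ω ∈ slice L n κ, (univ.val.map ω).count c = κ c := fun ω hω => by
    rw [← mem_slice.1 hω c, Multiset.count_map, card_def, filter_val]
    simp only [eq_comm]
  rw [h ω hω, h ω' hω']

lemma eq_comp_swap_of_mem_slice {ω ω' : Fin n → Fin L} (hω : ω ∈ slice L n κ)
    (hω' : ω' ∈ slice L n κ) {a b : Fin n} (hab : a ≠ b)
    (hdiff : ({i | ω i ≠ ω' i} : Finset (Fin n)) = {a, b}) :
    ω' = ω ∘ Equiv.swap a b := by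
  have hagree : ∀ i, i ≠ a → i ≠ b → ω i = ω' i := fun i hia hib => by
    by_contra h
    have : i ∈ ({a, b} : Finset (Fin n)) := hdiff ▸ mem_filter.2 ⟨mem_univ i, h⟩
    simp_all
  have hpair : ({ω a, ω b} : Multiset (Fin L)) = {ω' a, ω' b} := by
    have hsplit := map_univ_eq_of_mem_slice hω hω'
    have hsame : (univ.val.filter fun i => ¬ω i ≠ ω' i).map ω
        = (univ.val.filter fun i => ¬ω i ≠ ω' i).map ω' :=
      Multiset.map_congr rfl fun i hi => not_not.1 (Multiset.mem_filter.1 hi).2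
    rw [← Multiset.filter_add_not (p := fun i => ω i ≠ ω' i) univ.val, Multiset.map_add,
      Multiset.map_add, hsame, add_left_inj, ← filter_val, hdiff] at hsplit
    simpa [hab] using hsplit
  have ha : ω a ≠ ω' a := by
    have : a ∈ ({i | ω i ≠ ω' i} : Finset (Fin n)) := by simp [hdiff]
    simpa using this
  have ha' : ω' a = ω b := by
    have : ω' a ∈ ({ω a, ω b} : Multiset (Fin L)) := by simp [hpair]
    simpa [Ne.symm ha] using this
  have hb' : ω' b = ω a := by
    have : ω a ∈ ({ω' a, ω' b} : Multiset (Fin L)) := by simp [← hpair]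
    simpa [ha, eq_comm] using this
  funext i
  rcases eq_or_ne i a with rfl | hia
  · simp [ha']
  rcases eq_or_ne i b with rfl | hib
  · simp [hb']
  simp [Equiv.swap_apply_of_ne_of_ne hia hib, hagree i hia hib]

lemma card_coordFiber_eq (ℓ : Fin L) (z i : Fin n) :
    #(coordFiber κ i ℓ) = #(coordFiber κ z ℓ) := by
  have hmaps : ∀ a b : Fin n,
      Set.MapsTo (· ∘ Equiv.swap a b) (coordFiber κ a ℓ : Set (Fin n → Fin L))
        (coordFiber κ b ℓ) := fun a b ω hω => by
    simp only [coordFiber, coe_filter, Set.mem_ofPred_eq] at hω ⊢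
    exact ⟨comp_perm_mem_slice hω.1 _, by simpa using hω.2⟩
  refine card_nbij' (· ∘ Equiv.swap z i) (· ∘ Equiv.swap z i) ?_ (hmaps z i) ?_ ?_
  · simpa only [Equiv.swap_comm z i] using hmaps i z
  all_goals intro ω _; funext x; simp

lemma card_mul_card_coordFiber (ℓ : Fin L) (z : Fin n) :
    n * #(coordFiber κ z ℓ) = κ ℓ * #(slice L n κ) := by
  calc n * #(coordFiber κ z ℓ) = ∑ i, #(coordFiber κ i ℓ) := by
        rw [sum_congr rfl fun i _ => card_coordFiber_eq ℓ z i, sum_const, card_univ,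
          Fintype.card_fin, smul_eq_mul]
    _ = ∑ ω ∈ slice L n κ, #{i | ω i = ℓ} :=
        sum_card_bipartiteAbove_eq_sum_card_bipartiteBelow _
    _ = κ ℓ * #(slice L n κ) := by
        rw [sum_congr rfl fun ω hω => mem_slice.1 hω ℓ, sum_const, smul_eq_mul, mul_comm]

lemma exists_eq_comp_swap_of_mem_edgeBoundary {ℓ : Fin L} {z : Fin n}
    {p : (Fin n → Fin L) × (Fin n → Fin L)}
    (hp : p ∈ edgeBoundary (slice L n κ) (coordFiber κ z ℓ)) :
    ∃ j, p.2 = p.1 ∘ Equiv.swap z j := by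
  simp only [edgeBoundary, coordFiber, mem_filter, mem_product, mem_sdiff] at hp
  obtain ⟨⟨⟨hω, hz⟩, hω', hz'⟩, hcard⟩ := hp
  obtain ⟨a, b, hab, hdiff⟩ := card_eq_two.1 hcard
  have hzab : z ∈ ({a, b} : Finset (Fin n)) := by
    rw [← hdiff, mem_filter, hz]
    exact ⟨mem_univ z, fun h => hz' ⟨hω', h.symm⟩⟩
  have hswap := eq_comp_swap_of_mem_slice hω hω' hab hdiff
  rcases mem_insert.1 hzab with rfl | hzb
  · exact ⟨b, hswap⟩
  · rw [Equiv.swap_comm, ← mem_singleton.1 hzb] at hswap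
    exact ⟨a, hswap⟩

lemma card_edgeBoundary_coordFiber_le (ℓ : Fin L) (z : Fin n) :
    #(edgeBoundary (slice L n κ) (coordFiber κ z ℓ)) ≤ n * #(coordFiber κ z ℓ) := by
  calc #(edgeBoundary (slice L n κ) (coordFiber κ z ℓ))
      ≤ #((coordFiber κ z ℓ ×ˢ univ).image fun q => (q.1, q.1 ∘ Equiv.swap z q.2)) := by
        refine card_le_card fun p hp => ?_
        obtain ⟨j, hj⟩ := exists_eq_comp_swap_of_mem_edgeBoundary hp
        have hp₁ : p.1 ∈ coordFiber κ z ℓ := (mem_product.1 (mem_filter.1 hp).1).1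
        exact mem_image.2 ⟨(p.1, j), mem_product.2 ⟨hp₁, mem_univ j⟩, hj ▸ rfl⟩
    _ ≤ #(coordFiber κ z ℓ ×ˢ (univ : Finset (Fin n))) := card_image_le
    _ = n * #(coordFiber κ z ℓ) := by rw [card_product, card_univ, Fintype.card_fin, mul_comm]

end

lemma slice_nonempty {L : ℕ} (κ : Fin L → ℕ) : (slice L (∑ ℓ, κ ℓ) κ).Nonempty := by
  refine ⟨fun i => (finSigmaFinEquiv.symm i).1, mem_slice.2 fun c => ?_⟩
  rw [← Fintype.card_subtype]
  exact (Fintype.card_congr ((finSigmaFinEquiv.symm.subtypeEquiv fun _ => Iff.rfl).trans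
    (Equiv.sigmaSubtype c))).trans (Fintype.card_fin _)

theorem multislice_small_set_expansion_sharp_general
    (L : ℕ) (hL : 2 ≤ L) (κ : Fin L → ℕ) (hκ : ∀ ℓ, 0 < κ ℓ)
    (n : ℕ) (hn : n = ∑ ℓ, κ ℓ)
    (κmin : ℕ) (hmem : ∃ ℓ, κ ℓ = κmin) :
    ∃ A : Finset (Fin n → Fin L), A ⊆ slice L n κ ∧ A.Nonempty ∧
      A.card < (slice L n κ).card ∧
      ((edgeBoundary (slice L n κ) A).card : ℝ) * Real.log ((n : ℝ) / (κmin : ℝ)) ≤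
        (n : ℝ) * (A.card : ℝ) * Real.log (((slice L n κ).card : ℝ) / (A.card : ℝ)) := by
  obtain ⟨ℓ₀, rfl⟩ := hmem
  obtain ⟨ℓ₁, hℓ₁⟩ := Fintype.exists_ne_of_one_lt_card (by rw [Fintype.card_fin]; omega) ℓ₀
  have hκlt : κ ℓ₀ < n := hn ▸
    single_lt_sum hℓ₁ (mem_univ _) (mem_univ _) (hκ ℓ₁) fun _ _ _ => Nat.zero_le _
  set z : Fin n := ⟨0, (hκ ℓ₀).trans hκlt⟩
  set A := coordFiber κ z ℓ₀
  have hcount : n * #A = κ ℓ₀ * #(slice L n κ) := card_mul_card_coordFiber ℓ₀ z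
  have hΩ : 0 < #(slice L n κ) := (hn ▸ slice_nonempty κ).card_pos
  have hA : 0 < #A := pos_of_mul_pos_right (hcount ▸ Nat.mul_pos (hκ ℓ₀) hΩ) (Nat.zero_le _)
  refine ⟨A, filter_subset _ _, card_pos.1 hA,
    lt_of_mul_lt_mul_left (hcount ▸ Nat.mul_lt_mul_of_pos_right hκlt hΩ) (Nat.zero_le _), ?_⟩
  have hratio : (#(slice L n κ) : ℝ) / #A = n / κ ℓ₀ := by
    rw [div_eq_div_iff (by positivity) (by exact_mod_cast (hκ ℓ₀).ne')]
    exact_mod_cast (mul_comm _ _).trans hcount.symm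
  rw [hratio]
  exact mul_le_mul_of_nonneg_right (by exact_mod_cast card_edgeBoundary_coordFiber_le ℓ₀ z)
    (Real.log_nonneg ((one_le_div (by exact_mod_cast hκ ℓ₀)).2 (by exact_mod_cast hκlt.le)))

/-- small-set expansion on the multislice is sharp: there is a
nonempty proper subset witnessing the matching upper bound. -/
theorem multislice_small_set_expansion_sharp
    (L : ℕ) (hL : 2 ≤ L) (κ : Fin L → ℕ) (hκ : ∀ ℓ, 0 < κ ℓ)
    (n : ℕ) (hn : n = ∑ ℓ, κ ℓ)
    (κmin : ℕ) (hmin : ∀ ℓ, κmin ≤ κ ℓ) (hmem : ∃ ℓ, κ ℓ = κmin) :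
    ∃ A : Finset (Fin n → Fin L), A ⊆ slice L n κ ∧ A.Nonempty ∧
      A.card < (slice L n κ).card ∧
      ((edgeBoundary (slice L n κ) A).card : ℝ) * Real.log ((n : ℝ) / (κmin : ℝ)) ≤
        (n : ℝ) * (A.card : ℝ) * Real.log (((slice L n κ).card : ℝ) / (A.card : ℝ)) :=
  multislice_small_set_expansion_sharp_general L hL κ hκ n hn κmin hmem

end Multislice
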